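/- Let H be a 5×5 complex Hadamard matrix in dephased form, let ω = e^{2πi/5}, and suppose e is a function from pairs of indices to ℤ/5ℤ such that √5·H[j,k] = ω^{e(j,k)} for all indices j, k. Suppose j and j' are distinct indices in {1,2,3,4} and there exists a permutation τ of {1,2,3,4} with τ∘τ = id such that H[j,l] = H[j',τ(l)] for all l ∈ {1,2,3,4} (i.e., rows j and j' pair up). Then e(j,k) + e(j',k) = 0 in ℤ/5ℤ for every k ∈ {1,2,3,4}. -/

import Mathlib

open Matrix Polynomial Complex

/-- A 5×5 complex Hadamard matrix: unitary with all entries of absolute value `1/√5`. -/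
def IsHadamard (H : Matrix (Fin 5) (Fin 5) ℂ) : Prop :=
  H * Hᴴ = 1 ∧ Hᴴ * H = 1 ∧ ∀ i j, ‖H i j‖ = 1 / Real.sqrt 5

/-- Dephased form: all entries of the 0th row and 0th column equal `1/√5`. -/
def IsDephased (H : Matrix (Fin 5) (Fin 5) ℂ) : Prop :=
  (∀ j, H 0 j = ((1 / Real.sqrt 5 : ℝ) : ℂ)) ∧ (∀ i, H i 0 = ((1 / Real.sqrt 5 : ℝ) : ℂ))

/-!
Write `√5 H[j,k] = ω^e(j,k)`. Orthogonality of two distinct rows `i, i'` says that the five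
fifth roots of unity `ω^(e(i,l) - e(i',l))` sum to zero, and this happens only when they are
pairwise distinct: the polynomial recording their multiplicities has degree `< 5` and vanishes
at `ω`, so it is a multiple of `Φ₅ = 1 + X + ⋯ + X⁴`. Hence `l ↦ e(j,l)` and
`l ↦ e(j,l) - e(j',l) = e(j,l) - e(j,τ l)` are bijections onto `ℤ/5` sending `0` to `0`.
The second one forces `τ` to have no fixed point in `{1,2,3,4}`, so `τ` splits it into two
pairs `{k, τ k}`, `{c, τ c}`. Of the three ways to pair up `{1,2,3,4} ⊆ ℤ/5`, only
`{1,4}, {2,3}` gives four distinct differences, so `e(j,k) + e(j,τ k) = 0`.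
-/

open Finset
open scoped ComplexConjugate

theorem Polynomial.exists_eq_C_mul_cyclotomic_of_aeval_eq_zero {n : ℕ} (hn : 0 < n) {K : Type*}
    [Field K] [CharZero K] {μ : K} (hμ : IsPrimitiveRoot μ n) {q : ℚ[X]}
    (hdeg : q.natDegree ≤ n.totient) (hq : aeval μ q = 0) :
    ∃ c, q = C c * cyclotomic n ℚ := by
  obtain ⟨r, rfl⟩ : cyclotomic n ℚ ∣ q := by
    rw [cyclotomic_eq_minpoly_rat hμ hn]
    exact minpoly.dvd ℚ μ hq
  rcases eq_or_ne r 0 with rfl | hr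
  · exact ⟨0, by simp⟩
  have hr0 : r.natDegree = 0 := by
    rw [natDegree_mul (cyclotomic_ne_zero n ℚ) hr, natDegree_cyclotomic] at hdeg
    omega
  exact ⟨r.coeff 0, by rw [mul_comm, ← eq_C_of_natDegree_eq_zero hr0]⟩

theorem Polynomial.coeff_cyclotomic_prime_of_lt (R : Type*) [Ring R] {p : ℕ} [Fact p.Prime]
    {m : ℕ} (hm : m < p) : (cyclotomic p R).coeff m = 1 := by
  simp [cyclotomic_prime, coeff_X_pow, hm]

theorem IsPrimitiveRoot.injective_of_sum_pow_val_eq_zero {p : ℕ} [hp : Fact p.Prime] {K : Type*}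
    [Field K] [CharZero K] {ζ : K} (hζ : IsPrimitiveRoot ζ p) {ι : Type*} [Fintype ι]
    (hι : Fintype.card ι = p) {a : ι → ZMod p} (h : ∑ i, ζ ^ (a i).val = 0) :
    Function.Injective a := by
  classical
  set q : ℚ[X] := ∑ i, X ^ (a i).val
  have hcoeff : ∀ m, q.coeff m = #{i | (a i).val = m} := by
    intro m
    simp [q, finsetSum_coeff, coeff_X_pow, eq_comm]
  have hdeg : q.natDegree ≤ p.totient := by
    rw [Nat.totient_prime hp.out]
    refine natDegree_sum_le_of_forall_le _ _ fun i _ => ?_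
    have := (a i).val_lt
    rw [natDegree_X_pow]
    omega
  obtain ⟨c, hc⟩ := exists_eq_C_mul_cyclotomic_of_aeval_eq_zero hp.out.pos hζ hdeg
    (by simpa [q] using h)
  have hc1 : c = 1 := by
    have := congrArg (eval 1) hc
    simp only [q, eval_finsetSum, eval_pow, eval_X, one_pow, sum_const, card_univ, hι,
      nsmul_eq_mul, mul_one, eval_mul, eval_C, eval_one_cyclotomic_prime] at this
    simpa [hp.out.ne_zero] using this.symm
  intro i i' hii'
  have hfiber : #{l | (a l).val = (a i).val} = 1 := by
    have := hcoeff (a i).val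
    rw [hc, hc1, C_1, one_mul, coeff_cyclotomic_prime_of_lt ℚ (a i).val_lt] at this
    exact_mod_cast this.symm
  exact Finset.card_le_one.mp hfiber.le i (by simp) i' (by simp [hii'])

theorem sum_addChar_sub_eq_zero_of_mul_conjTranspose_eq_one {n : Type*} [Fintype n]
    [DecidableEq n] {H : Matrix n n ℂ} (hH : H * Hᴴ = 1) {G : Type*} [AddCommGroup G] [Finite G]
    (ψ : AddChar G ℂ) (r : ℝ) {e : n → n → G} (he : ∀ j k, (r : ℂ) * H j k = ψ (e j k))
    {i i' : n} (hii' : i ≠ i') : ∑ l, ψ (e i l - e i' l) = 0 := by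
  have hrow : ∑ l, H i l * conj (H i' l) = 0 := by
    simpa [Matrix.mul_apply, Matrix.one_apply_ne hii'] using congrFun (congrFun hH i) i'
  calc ∑ l, ψ (e i l - e i' l) = ∑ l, ψ (e i l) * conj (ψ (e i' l)) := by
        simp only [sub_eq_add_neg, AddChar.map_add_eq_mul, AddChar.map_neg_eq_conj]
    _ = (r : ℂ) ^ 2 * ∑ l, H i l * conj (H i' l) := by
        simp only [← he, mul_sum, map_mul, conj_ofReal]
        refine sum_congr rfl fun l _ => by ring
    _ = 0 := by rw [hrow, mul_zero]

theorem ZMod.stdAddChar_eq_exp_pow_val {N : ℕ} [NeZero N] (c : ZMod N) :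
    ZMod.stdAddChar c = exp (2 * Real.pi * I / N) ^ c.val := by
  rw [ZMod.stdAddChar_apply, ZMod.toCircle_apply, ← Complex.exp_nat_mul]
  ring_nf

theorem IsHadamard.injective_sub_of_exponents {H : Matrix (Fin 5) (Fin 5) ℂ}
    (hH : _root_.IsHadamard H) {e : Fin 5 → Fin 5 → ZMod 5}
    (he : ∀ j k, (Real.sqrt 5 : ℂ) * H j k = ZMod.stdAddChar (e j k)) {i i' : Fin 5}
    (hii' : i ≠ i') : Function.Injective fun l => e i l - e i' l :=
  have : Fact (Nat.Prime 5) := ⟨Nat.prime_five⟩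
  (isPrimitiveRoot_exp 5 (by norm_num)).injective_of_sum_pow_val_eq_zero (by simp) <| by
    simpa [ZMod.stdAddChar_eq_exp_pow_val] using
      sum_addChar_sub_eq_zero_of_mul_conjTranspose_eq_one hH.1 _ _ he hii'

theorem add_eq_zero_of_nodup_zmod_five : ∀ x y z w : ZMod 5, [0, x, y, z, w].Nodup →
    [0, x - y, y - x, z - w, w - z].Nodup → x + y = 0 := by
  decide

theorem add_apply_eq_zero_of_injective_sub_apply {f : Fin 5 → ZMod 5} (hf : Function.Injective f)
    (hf0 : f 0 = 0) {τ : Fin 5 → Fin 5} (hτ : Function.Involutive τ) (hτ0 : τ 0 = 0)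
    (hd : Function.Injective fun l => f l - f (τ l)) {k : Fin 5} (hk : k ≠ 0) :
    f k + f (τ k) = 0 := by
  have hfix : ∀ l, l ≠ 0 → τ l ≠ l := fun l hl h => hl (hd (by simp [h, hτ0]))
  obtain ⟨c, hc0, hck, hcτk⟩ : ∃ c, c ≠ 0 ∧ c ≠ k ∧ c ≠ τ k := by
    have : ∀ x y z : Fin 5, ∃ c, c ≠ x ∧ c ≠ y ∧ c ≠ z := by decide
    exact this 0 k (τ k)
  have hnodup : [0, k, τ k, c, τ c].Nodup := by
    have := hfix k hk
    have := hfix c hc0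
    have : ∀ x, τ (τ x) = x := hτ
    grind [List.nodup_cons]
  refine add_eq_zero_of_nodup_zmod_five _ _ (f c) (f (τ c)) ?_ ?_
  · simpa [hf0] using hnodup.map hf
  · simpa [hf0, hτ0, hτ k, hτ c] using hnodup.map hd

theorem pairup_exponents_sum_zero_general
    (H : Matrix (Fin 5) (Fin 5) ℂ)
    (hH : _root_.IsHadamard H) (hd : IsDephased H)
    (e : Fin 5 → Fin 5 → ZMod 5)
    (he : ∀ j k, (Real.sqrt 5 : ℂ) * H j k =
      Complex.exp (2 * Real.pi * Complex.I / 5) ^ (e j k).val)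
    (j j' : Fin 5) (hjj' : j ≠ j') (hj : j ≠ 0)
    (τ : Equiv.Perm (Fin 5)) (hτ0 : τ 0 = 0) (hτ2 : ∀ l, τ (τ l) = l)
    (hpair : ∀ l, l ≠ 0 → H j l = H j' (τ l)) :
    ∀ k : Fin 5, k ≠ 0 → e j k + e j' k = 0 := by
  intro k hk
  have hψ : ∀ j k, (Real.sqrt 5 : ℂ) * H j k = ZMod.stdAddChar (e j k) := by
    simpa [ZMod.stdAddChar_eq_exp_pow_val] using he
  have hexp_eq : ∀ i l i' l', H i l = H i' l' → e i l = e i' l' := fun i l i' l' h =>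
    ZMod.injective_stdAddChar <| by rw [← hψ, ← hψ, h]
  have hexp_zero : ∀ i l, H i l = ((1 / Real.sqrt 5 : ℝ) : ℂ) → e i l = 0 := fun i l h =>
    ZMod.injective_stdAddChar <| by
      rw [AddChar.map_zero_eq_one, ← hψ, h, ofReal_div, ofReal_one, mul_one_div_cancel]
      exact_mod_cast (Real.sqrt_pos.mpr (by norm_num : (0 : ℝ) < 5)).ne'
  have hτ : ∀ l, e j' l = e j (τ l) := by
    intro l
    rcases eq_or_ne l 0 with rfl | hl
    · rw [hτ0, hexp_zero _ _ (hd.2 j), hexp_zero _ _ (hd.2 j')]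
    · refine hexp_eq _ _ _ _ ?_
      rw [hpair (τ l) fun h => hl (by rw [← hτ2 l, h, hτ0]), hτ2]
  rw [hτ k]
  refine add_apply_eq_zero_of_injective_sub_apply ?_ (hexp_zero _ _ (hd.2 j)) hτ2 hτ0 ?_ hk
  · simpa [hexp_zero 0 _ (hd.1 _)] using hH.injective_sub_of_exponents hψ hj
  · simpa [hτ] using hH.injective_sub_of_exponents hψ hjj'

theorem pairup_exponents_sum_zero
    (H : Matrix (Fin 5) (Fin 5) ℂ)
    (hH : _root_.IsHadamard H) (hd : IsDephased H)
    (e : Fin 5 → Fin 5 → ZMod 5)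
    (he : ∀ j k, (Real.sqrt 5 : ℂ) * H j k =
      Complex.exp (2 * Real.pi * Complex.I / 5) ^ (e j k).val)
    (j j' : Fin 5) (hjj' : j ≠ j') (hj : j ≠ 0) (hj' : j' ≠ 0)
    (τ : Equiv.Perm (Fin 5)) (hτ0 : τ 0 = 0) (hτ2 : ∀ l, τ (τ l) = l)
    (hpair : ∀ l, l ≠ 0 → H j l = H j' (τ l)) :
    ∀ k : Fin 5, k ≠ 0 → e j k + e j' k = 0 :=
  pairup_exponents_sum_zero_general H hH hd e he j j' hjj' hj τ hτ0 hτ2 hpair
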